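/- arXiv:math/0411119 — 3 statements merged into one kernel-verified Lean document; each statement's English description precedes it below -/
import Mathlib

section
/- Let g = (g₁,…,g_r) ∈ GL(V)^r with ∏ gᵢ = 1, and let H_g := {(v₁,…,v_r) ∈ V^r : vᵢ ∈ Im(gᵢ − 1) for all i, and v₁·g₂⋯g_r + v₂·g₃⋯g_r + ⋯ + v_r = 0}. Then the map Φ(g,βᵢ) sending (v₁,…,v_r) to the tuple with entries vᵢ replaced by v_{i+1} at position i and by v_{i+1}·(1 − g_{i+1}^{-1} gᵢ g_{i+1}) + vᵢ·g_{i+1} at position i+1 (all other entries unchanged) is a well-defined R-linear isomorphism from H_g onto H_{g^{βᵢ}}. -/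
open Matrix

/-- `H_g`: tuples `(v₁,…,v_r)` with `vᵢ ∈ Im(gᵢ - 1)` satisfying the cocycle
relation `v₁·g₂⋯g_r + v₂·g₃⋯g_r + ⋯ + v_r = 0`. -/
def Hset {R : Type*} [CommRing R] {n r : ℕ}
    (g : Fin r → Matrix.GeneralLinearGroup (Fin n) R) :
    Set (Fin r → (Fin n → R)) :=
  {v | (∀ i, ∃ u, Matrix.vecMul u ((g i : Matrix (Fin n) (Fin n) R) - 1) = v i) ∧
    ∑ i : Fin r, Matrix.vecMul (v i)
      ((((List.ofFn g).drop (i.val + 1)).prod :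
        Matrix.GeneralLinearGroup (Fin n) R) : Matrix (Fin n) (Fin n) R) = 0}

/-- `E_g`: the submodule of coboundary tuples `(v·(g₁-1),…,v·(g_r-1))`. -/
def Eset {R : Type*} [CommRing R] {n r : ℕ}
    (g : Fin r → Matrix.GeneralLinearGroup (Fin n) R) :
    Set (Fin r → (Fin n → R)) :=
  {v | ∃ u, ∀ i, v i = Matrix.vecMul u ((g i : Matrix (Fin n) (Fin n) R) - 1)}
/-- The braid generator `βᵢ` acting on tuples in `GL(V)^r`. -/
def braidAct {R : Type*} [CommRing R] {n r : ℕ} (i : ℕ)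
    (g : Fin r → Matrix.GeneralLinearGroup (Fin n) R) :
    Fin r → Matrix.GeneralLinearGroup (Fin n) R :=
  fun j =>
    if h : i + 1 < r then
      if j.val = i then g ⟨i + 1, h⟩
      else if j.val = i + 1 then
        (g ⟨i + 1, h⟩)⁻¹ * g ⟨i, Nat.lt_of_succ_lt h⟩ * g ⟨i + 1, h⟩
      else g j
    else g j

/-- The map `Φ(g, βᵢ)` of the paper: it replaces the entries `(vᵢ, v_{i+1})` at
positions `(i, i+1)` by `(v_{i+1}, v_{i+1}·(1 - g_{i+1}⁻¹gᵢg_{i+1}) + vᵢ·g_{i+1})`. -/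
def PhiMap {R : Type*} [CommRing R] {n r : ℕ}
    (g : Fin r → Matrix.GeneralLinearGroup (Fin n) R) (i : ℕ)
    (v : Fin r → (Fin n → R)) : Fin r → (Fin n → R) :=
  fun j =>
    if h : i + 1 < r then
      if j.val = i then v ⟨i + 1, h⟩
      else if j.val = i + 1 then
        Matrix.vecMul (v ⟨i + 1, h⟩)
          ((1 : Matrix (Fin n) (Fin n) R) -
            (((g ⟨i + 1, h⟩)⁻¹ * g ⟨i, Nat.lt_of_succ_lt h⟩ * g ⟨i + 1, h⟩ :
              Matrix.GeneralLinearGroup (Fin n) R) : Matrix (Fin n) (Fin n) R)) +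
        Matrix.vecMul (v ⟨i, Nat.lt_of_succ_lt h⟩)
          ((g ⟨i + 1, h⟩ : Matrix (Fin n) (Fin n) R))
      else v j
    else v j

/-- The inverse of `PhiMap g i`. -/
def PsiMap {R : Type*} [CommRing R] {n r : ℕ}
    (g : Fin r → Matrix.GeneralLinearGroup (Fin n) R) (i : ℕ)
    (w : Fin r → (Fin n → R)) : Fin r → (Fin n → R) :=
  fun j =>
    if h : i + 1 < r then
      if j.val = i then
        Matrix.vecMul
          (w ⟨i + 1, h⟩ -
            Matrix.vecMul (w ⟨i, Nat.lt_of_succ_lt h⟩)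
              ((1 : Matrix (Fin n) (Fin n) R) -
                (((g ⟨i + 1, h⟩)⁻¹ * g ⟨i, Nat.lt_of_succ_lt h⟩ * g ⟨i + 1, h⟩ :
                  Matrix.GeneralLinearGroup (Fin n) R) : Matrix (Fin n) (Fin n) R)))
          (((g ⟨i + 1, h⟩)⁻¹ : Matrix.GeneralLinearGroup (Fin n) R) :
            Matrix (Fin n) (Fin n) R)
      else if j.val = i + 1 then w ⟨i, Nat.lt_of_succ_lt h⟩
      else w j
    else w j

private lemma ofFn_drop_prod_succ {r : ℕ} {M : Type*} [Monoid M] (f : Fin r → M) (k : ℕ)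
    (hk : k < r) :
    ((List.ofFn f).drop k).prod = f ⟨k, hk⟩ * ((List.ofFn f).drop (k+1)).prod := by
  rw [List.drop_eq_getElem_cons (by simpa using hk), List.prod_cons, List.getElem_ofFn]

private lemma ofFn_drop_eq {r : ℕ} {M : Type*} (f₁ f₂ : Fin r → M) (k : ℕ)
    (h : ∀ j : Fin r, k ≤ j.val → f₁ j = f₂ j) :
    (List.ofFn f₁).drop k = (List.ofFn f₂).drop k := by
  apply List.ext_getElem
  · simp
  · intro m h1 h2
    simp only [List.getElem_drop, List.getElem_ofFn]
    exact h _ (Nat.le_add_right k m)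

section BraidFacts

variable {R : Type*} [CommRing R] {n r : ℕ}

private lemma braidAct_at_i (g : Fin r → Matrix.GeneralLinearGroup (Fin n) R)
    (i : ℕ) (hi : i + 1 < r) :
    braidAct i g ⟨i, Nat.lt_of_succ_lt hi⟩ = g ⟨i + 1, hi⟩ := by
  simp [braidAct, hi]

private lemma braidAct_at_i1 (g : Fin r → Matrix.GeneralLinearGroup (Fin n) R)
    (i : ℕ) (hi : i + 1 < r) :
    braidAct i g ⟨i + 1, hi⟩ =
      (g ⟨i + 1, hi⟩)⁻¹ * g ⟨i, Nat.lt_of_succ_lt hi⟩ * g ⟨i + 1, hi⟩ := by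
  simp [braidAct, hi]

private lemma braidAct_other (g : Fin r → Matrix.GeneralLinearGroup (Fin n) R)
    (i : ℕ) {j : Fin r} (h1 : j.val ≠ i) (h2 : j.val ≠ i + 1) :
    braidAct i g j = g j := by
  by_cases h : i + 1 < r <;> simp [braidAct, h, h1, h2]

private lemma drop_braid_high (g : Fin r → Matrix.GeneralLinearGroup (Fin n) R)
    (i : ℕ) (k : ℕ) (hk : i + 2 ≤ k) :
    (List.ofFn (braidAct i g)).drop k = (List.ofFn g).drop k :=
  ofFn_drop_eq _ _ k fun j hj => braidAct_other g i (by omega) (by omega)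

private lemma prod_drop_i1_braid (g : Fin r → Matrix.GeneralLinearGroup (Fin n) R)
    (i : ℕ) (hi : i + 1 < r) :
    ((List.ofFn (braidAct i g)).drop (i + 1)).prod =
      (g ⟨i + 1, hi⟩)⁻¹ * g ⟨i, Nat.lt_of_succ_lt hi⟩ * g ⟨i + 1, hi⟩ *
        ((List.ofFn g).drop (i + 2)).prod := by
  rw [ofFn_drop_prod_succ _ (i+1) hi, braidAct_at_i1 g i hi,
    drop_braid_high g i (i + 1 + 1) (by omega)]

private lemma prod_drop_i1_g (g : Fin r → Matrix.GeneralLinearGroup (Fin n) R)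
    (i : ℕ) (hi : i + 1 < r) :
    ((List.ofFn g).drop (i + 1)).prod =
      g ⟨i + 1, hi⟩ * ((List.ofFn g).drop (i + 2)).prod :=
  ofFn_drop_prod_succ g (i+1) hi

private lemma prod_drop_le (g : Fin r → Matrix.GeneralLinearGroup (Fin n) R)
    (i : ℕ) (hi : i + 1 < r) : ∀ d k, k + d = i →
    ((List.ofFn (braidAct i g)).drop k).prod = ((List.ofFn g).drop k).prod := by
  intro d
  induction d with
  | zero =>
    intro k hk
    have hk' : k = i := by omega
    subst hk'
    rw [ofFn_drop_prod_succ _ k (by omega), ofFn_drop_prod_succ g k (by omega),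
      braidAct_at_i g k hi, prod_drop_i1_braid g k hi, prod_drop_i1_g g k hi]
    simp [mul_assoc]
  | succ d ih =>
    intro k hk
    have hkr : k < r := by omega
    have h1 : (⟨k, hkr⟩ : Fin r).val ≠ i := by simp; omega
    have h2 : (⟨k, hkr⟩ : Fin r).val ≠ i + 1 := by simp; omega
    rw [ofFn_drop_prod_succ _ k hkr, ofFn_drop_prod_succ g k hkr,
      braidAct_other g i h1 h2, ih (k+1) (by omega)]

end BraidFacts
section PhiPsi

variable {R : Type*} [CommRing R] {n r : ℕ}
  (g : Fin r → Matrix.GeneralLinearGroup (Fin n) R) (i : ℕ) (hi : i + 1 < r)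
  (v : Fin r → (Fin n → R))

private lemma PhiMap_at_i :
    PhiMap g i v ⟨i, Nat.lt_of_succ_lt hi⟩ = v ⟨i + 1, hi⟩ := by
  simp [PhiMap, hi]

private lemma PhiMap_at_i1 :
    PhiMap g i v ⟨i + 1, hi⟩ =
      Matrix.vecMul (v ⟨i + 1, hi⟩)
        ((1 : Matrix (Fin n) (Fin n) R) -
          (((g ⟨i + 1, hi⟩)⁻¹ * g ⟨i, Nat.lt_of_succ_lt hi⟩ * g ⟨i + 1, hi⟩ :
            Matrix.GeneralLinearGroup (Fin n) R) : Matrix (Fin n) (Fin n) R)) +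
      Matrix.vecMul (v ⟨i, Nat.lt_of_succ_lt hi⟩)
        ((g ⟨i + 1, hi⟩ : Matrix (Fin n) (Fin n) R)) := by
  simp [PhiMap, hi]

private lemma PhiMap_other {j : Fin r} (h1 : j.val ≠ i) (h2 : j.val ≠ i + 1) :
    PhiMap g i v j = v j := by
  by_cases h : i + 1 < r <;> simp [PhiMap, h, h1, h2]

private lemma PsiMap_at_i :
    PsiMap g i v ⟨i, Nat.lt_of_succ_lt hi⟩ =
      Matrix.vecMul
        (v ⟨i + 1, hi⟩ -
          Matrix.vecMul (v ⟨i, Nat.lt_of_succ_lt hi⟩)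
            ((1 : Matrix (Fin n) (Fin n) R) -
              (((g ⟨i + 1, hi⟩)⁻¹ * g ⟨i, Nat.lt_of_succ_lt hi⟩ * g ⟨i + 1, hi⟩ :
                Matrix.GeneralLinearGroup (Fin n) R) : Matrix (Fin n) (Fin n) R)))
        (((g ⟨i + 1, hi⟩)⁻¹ : Matrix.GeneralLinearGroup (Fin n) R) :
          Matrix (Fin n) (Fin n) R) := by
  simp [PsiMap, hi]

private lemma PsiMap_at_i1 :
    PsiMap g i v ⟨i + 1, hi⟩ = v ⟨i, Nat.lt_of_succ_lt hi⟩ := by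
  simp [PsiMap, hi]

private lemma PsiMap_other {j : Fin r} (h1 : j.val ≠ i) (h2 : j.val ≠ i + 1) :
    PsiMap g i v j = v j := by
  by_cases h : i + 1 < r <;> simp [PsiMap, h, h1, h2]

private lemma PsiMap_PhiMap (hi : i + 1 < r) : PsiMap g i (PhiMap g i v) = v := by
  funext j
  by_cases h1 : j.val = i
  · have hj : j = ⟨i, Nat.lt_of_succ_lt hi⟩ := Fin.ext h1
    subst hj
    rw [PsiMap_at_i g i hi, PhiMap_at_i1 g i hi, PhiMap_at_i g i hi,
      add_sub_cancel_left, Matrix.vecMul_vecMul]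
    simp
  · by_cases h2 : j.val = i + 1
    · have hj : j = ⟨i + 1, hi⟩ := Fin.ext h2
      subst hj
      rw [PsiMap_at_i1 g i hi, PhiMap_at_i g i hi]
    · rw [PsiMap_other g i _ h1 h2, PhiMap_other g i v h1 h2]

private lemma PhiMap_PsiMap (hi : i + 1 < r) : PhiMap g i (PsiMap g i v) = v := by
  funext j
  by_cases h1 : j.val = i
  · have hj : j = ⟨i, Nat.lt_of_succ_lt hi⟩ := Fin.ext h1
    subst hj
    rw [PhiMap_at_i g i hi, PsiMap_at_i1 g i hi]
  · by_cases h2 : j.val = i + 1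
    · have hj : j = ⟨i + 1, hi⟩ := Fin.ext h2
      subst hj
      rw [PhiMap_at_i1 g i hi, PsiMap_at_i1 g i hi, PsiMap_at_i g i hi,
        Matrix.vecMul_vecMul]
      simp
    · rw [PhiMap_other g i _ h1 h2, PsiMap_other g i v h1 h2]

end PhiPsi
private lemma key_BC {S : Type*} [Ring S] {A B Bi C : S} (hBi : B * Bi = 1)
    (hC : C = Bi * A * B) : B * (C - 1) = (A - 1) * B := by
  rw [hC, mul_sub, sub_mul, mul_one, one_mul, ← mul_assoc, ← mul_assoc, hBi, one_mul]

private lemma key_BiC {S : Type*} [Ring S] {A B Bi C : S} (hBi : B * Bi = 1)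
    (hC : C = Bi * A * B) : Bi * (A - 1) = (C - 1) * Bi := by
  rw [hC, mul_sub, sub_mul, mul_one, one_mul, mul_assoc, mul_assoc, hBi, mul_one]

section Mem

variable {R : Type*} [CommRing R] {n r : ℕ}

private lemma prod_drop_eq_of_ne (g : Fin r → Matrix.GeneralLinearGroup (Fin n) R)
    (i : ℕ) (hi : i + 1 < r) {j : Fin r} (h1 : j.val ≠ i) (h2 : j.val ≠ i + 1) :
    ((List.ofFn (braidAct i g)).drop (j.val + 1)).prod =
      ((List.ofFn g).drop (j.val + 1)).prod := by
  rcases Nat.lt_or_ge j.val i with h | h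
  · exact prod_drop_le g i hi (i - (j.val + 1)) (j.val + 1) (by omega)
  · rw [drop_braid_high g i (j.val + 1) (by omega)]

private lemma PhiMap_mem (g : Fin r → Matrix.GeneralLinearGroup (Fin n) R)
    (i : ℕ) (hi : i + 1 < r) {v : Fin r → (Fin n → R)} (hv : v ∈ Hset g) :
    PhiMap g i v ∈ Hset (braidAct i g) := by
  obtain ⟨himg, hsum⟩ := hv
  have hne : (⟨i, Nat.lt_of_succ_lt hi⟩ : Fin r) ≠ ⟨i + 1, hi⟩ := by
    simp [Fin.ext_iff]
  have hBBi : (g ⟨i + 1, hi⟩ : Matrix (Fin n) (Fin n) R) *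
      (((g ⟨i + 1, hi⟩)⁻¹ : Matrix.GeneralLinearGroup (Fin n) R) :
        Matrix (Fin n) (Fin n) R) = 1 := by simp
  have hCeq : (((g ⟨i + 1, hi⟩)⁻¹ * g ⟨i, Nat.lt_of_succ_lt hi⟩ * g ⟨i + 1, hi⟩ :
      Matrix.GeneralLinearGroup (Fin n) R) : Matrix (Fin n) (Fin n) R) =
      (((g ⟨i + 1, hi⟩)⁻¹ : Matrix.GeneralLinearGroup (Fin n) R) :
        Matrix (Fin n) (Fin n) R) *
      ((g ⟨i, Nat.lt_of_succ_lt hi⟩ : Matrix.GeneralLinearGroup (Fin n) R) :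
        Matrix (Fin n) (Fin n) R) *
      ((g ⟨i + 1, hi⟩ : Matrix.GeneralLinearGroup (Fin n) R) :
        Matrix (Fin n) (Fin n) R) := by
    simp [Units.val_mul]
  constructor
  · intro j
    by_cases h1 : j.val = i
    · have hj : j = ⟨i, Nat.lt_of_succ_lt hi⟩ := Fin.ext h1
      subst hj
      rw [braidAct_at_i g i hi, PhiMap_at_i g i hi]
      exact himg ⟨i + 1, hi⟩
    · by_cases h2 : j.val = i + 1
      · have hj : j = ⟨i + 1, hi⟩ := Fin.ext h2
        subst hj
        rw [braidAct_at_i1 g i hi, PhiMap_at_i1 g i hi]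
        obtain ⟨u, hu⟩ := himg ⟨i, Nat.lt_of_succ_lt hi⟩
        refine ⟨Matrix.vecMul u (g ⟨i + 1, hi⟩ : Matrix (Fin n) (Fin n) R) -
          v ⟨i + 1, hi⟩, ?_⟩
        rw [Matrix.sub_vecMul, Matrix.vecMul_vecMul, key_BC hBBi hCeq,
          ← Matrix.vecMul_vecMul, hu, Matrix.vecMul_sub, Matrix.vecMul_sub,
          Matrix.vecMul_one]
        abel
      · rw [braidAct_other g i h1 h2, PhiMap_other g i v h1 h2]
        exact himg j
  · have hsplit := Finset.sum_compl_add_sum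
      ({⟨i, Nat.lt_of_succ_lt hi⟩, ⟨i + 1, hi⟩} : Finset (Fin r))
      (fun j => Matrix.vecMul (v j)
        ((((List.ofFn g).drop (j.val + 1)).prod :
          Matrix.GeneralLinearGroup (Fin n) R) : Matrix (Fin n) (Fin n) R))
    rw [hsum] at hsplit
    rw [← Finset.sum_compl_add_sum
      ({⟨i, Nat.lt_of_succ_lt hi⟩, ⟨i + 1, hi⟩} : Finset (Fin r)), ← hsplit]
    congr 1
    · refine Finset.sum_congr rfl fun j hj => ?_
      simp only [Finset.mem_compl, Finset.mem_insert, Finset.mem_singleton, not_or] at hj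
      have h1 : j.val ≠ i := fun h => hj.1 (Fin.ext h)
      have h2 : j.val ≠ i + 1 := fun h => hj.2 (Fin.ext h)
      rw [PhiMap_other g i v h1 h2, prod_drop_eq_of_ne g i hi h1 h2]
    · rw [Finset.sum_pair hne, Finset.sum_pair hne]
      simp only [Fin.val_mk]
      rw [PhiMap_at_i g i hi, PhiMap_at_i1 g i hi, prod_drop_i1_braid g i hi,
        prod_drop_i1_g g i hi, drop_braid_high g i (i + 1 + 1) (by omega)]
      simp only [Units.val_mul, ← Matrix.vecMul_vecMul, Matrix.add_vecMul,
        Matrix.sub_vecMul, Matrix.vecMul_sub, Matrix.vecMul_one]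
      abel

private lemma PsiMap_mem (g : Fin r → Matrix.GeneralLinearGroup (Fin n) R)
    (i : ℕ) (hi : i + 1 < r) {w : Fin r → (Fin n → R)}
    (hw : w ∈ Hset (braidAct i g)) : PsiMap g i w ∈ Hset g := by
  obtain ⟨himg, hsum⟩ := hw
  have hne : (⟨i, Nat.lt_of_succ_lt hi⟩ : Fin r) ≠ ⟨i + 1, hi⟩ := by
    simp [Fin.ext_iff]
  have hBBi : (g ⟨i + 1, hi⟩ : Matrix (Fin n) (Fin n) R) *
      (((g ⟨i + 1, hi⟩)⁻¹ : Matrix.GeneralLinearGroup (Fin n) R) :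
        Matrix (Fin n) (Fin n) R) = 1 := by simp
  have hBiB : (((g ⟨i + 1, hi⟩)⁻¹ : Matrix.GeneralLinearGroup (Fin n) R) :
        Matrix (Fin n) (Fin n) R) *
      (g ⟨i + 1, hi⟩ : Matrix (Fin n) (Fin n) R) = 1 := by simp
  have hCeq : (((g ⟨i + 1, hi⟩)⁻¹ * g ⟨i, Nat.lt_of_succ_lt hi⟩ * g ⟨i + 1, hi⟩ :
      Matrix.GeneralLinearGroup (Fin n) R) : Matrix (Fin n) (Fin n) R) =
      (((g ⟨i + 1, hi⟩)⁻¹ : Matrix.GeneralLinearGroup (Fin n) R) :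
        Matrix (Fin n) (Fin n) R) *
      ((g ⟨i, Nat.lt_of_succ_lt hi⟩ : Matrix.GeneralLinearGroup (Fin n) R) :
        Matrix (Fin n) (Fin n) R) *
      ((g ⟨i + 1, hi⟩ : Matrix.GeneralLinearGroup (Fin n) R) :
        Matrix (Fin n) (Fin n) R) := by
    simp [Units.val_mul]
  constructor
  · intro j
    by_cases h1 : j.val = i
    · have hj : j = ⟨i, Nat.lt_of_succ_lt hi⟩ := Fin.ext h1
      subst hj
      rw [PsiMap_at_i g i hi]
      obtain ⟨u, hu⟩ := himg ⟨i + 1, hi⟩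
      rw [braidAct_at_i1 g i hi] at hu
      obtain ⟨u0, hu0⟩ := himg ⟨i, Nat.lt_of_succ_lt hi⟩
      refine ⟨Matrix.vecMul u
          (((g ⟨i + 1, hi⟩)⁻¹ : Matrix.GeneralLinearGroup (Fin n) R) :
            Matrix (Fin n) (Fin n) R) +
        Matrix.vecMul (w ⟨i, Nat.lt_of_succ_lt hi⟩)
          (((g ⟨i + 1, hi⟩)⁻¹ : Matrix.GeneralLinearGroup (Fin n) R) :
            Matrix (Fin n) (Fin n) R), ?_⟩
      rw [Matrix.add_vecMul, Matrix.vecMul_vecMul, Matrix.vecMul_vecMul,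
        key_BiC hBBi hCeq, ← Matrix.vecMul_vecMul, ← Matrix.vecMul_vecMul, hu]
      simp only [Matrix.sub_vecMul, Matrix.vecMul_sub, Matrix.vecMul_one]
      abel
    · by_cases h2 : j.val = i + 1
      · have hj : j = ⟨i + 1, hi⟩ := Fin.ext h2
        subst hj
        rw [PsiMap_at_i1 g i hi]
        obtain ⟨u, hu⟩ := himg ⟨i, Nat.lt_of_succ_lt hi⟩
        rw [braidAct_at_i g i hi] at hu
        exact ⟨u, hu⟩
      · rw [PsiMap_other g i w h1 h2]
        have := himg j
        rwa [braidAct_other g i h1 h2] at this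
  · have hsplit := Finset.sum_compl_add_sum
      ({⟨i, Nat.lt_of_succ_lt hi⟩, ⟨i + 1, hi⟩} : Finset (Fin r))
      (fun j => Matrix.vecMul (w j)
        ((((List.ofFn (braidAct i g)).drop (j.val + 1)).prod :
          Matrix.GeneralLinearGroup (Fin n) R) : Matrix (Fin n) (Fin n) R))
    rw [hsum] at hsplit
    rw [← Finset.sum_compl_add_sum
      ({⟨i, Nat.lt_of_succ_lt hi⟩, ⟨i + 1, hi⟩} : Finset (Fin r)), ← hsplit]
    congr 1
    · refine Finset.sum_congr rfl fun j hj => ?_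
      simp only [Finset.mem_compl, Finset.mem_insert, Finset.mem_singleton, not_or] at hj
      have h1 : j.val ≠ i := fun h => hj.1 (Fin.ext h)
      have h2 : j.val ≠ i + 1 := fun h => hj.2 (Fin.ext h)
      rw [PsiMap_other g i w h1 h2, prod_drop_eq_of_ne g i hi h1 h2]
    · rw [Finset.sum_pair hne, Finset.sum_pair hne]
      simp only [Fin.val_mk]
      rw [PsiMap_at_i g i hi, PsiMap_at_i1 g i hi, prod_drop_i1_braid g i hi,
        prod_drop_i1_g g i hi, drop_braid_high g i (i + 1 + 1) (by omega)]
      have hcollapse : ∀ x : Fin n → R,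
          Matrix.vecMul (Matrix.vecMul x
            (((g ⟨i + 1, hi⟩)⁻¹ : Matrix.GeneralLinearGroup (Fin n) R) :
              Matrix (Fin n) (Fin n) R))
            ((g ⟨i + 1, hi⟩ : Matrix (Fin n) (Fin n) R)) = x := fun x => by
        rw [Matrix.vecMul_vecMul, hBiB, Matrix.vecMul_one]
      simp only [Units.val_mul, ← Matrix.vecMul_vecMul, Matrix.add_vecMul,
        Matrix.sub_vecMul, Matrix.vecMul_sub, Matrix.vecMul_one, hcollapse]
      abel

end Mem

/-- `Φ(g, βᵢ)` is a well-defined `R`-linear isomorphism from `H_g`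
onto `H_{g^{βᵢ}}`. -/
theorem PhiMap_bijOn_linear {R : Type*} [CommRing R] {n r : ℕ}
    (g : Fin r → Matrix.GeneralLinearGroup (Fin n) R)
    (hg : (List.ofFn g).prod = 1)
    (i : ℕ) (hi : i + 1 < r) :
    Set.BijOn (PhiMap g i) (Hset g) (Hset (braidAct i g)) ∧
    (∀ v w : Fin r → (Fin n → R), PhiMap g i (v + w) = PhiMap g i v + PhiMap g i w) ∧
    (∀ (c : R) (v : Fin r → (Fin n → R)), PhiMap g i (c • v) = c • PhiMap g i v) := by
  refine ⟨Set.InvOn.bijOn (f' := PsiMap g i)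
      ⟨fun v _ => PsiMap_PhiMap g i v hi, fun w _ => PhiMap_PsiMap g i w hi⟩
      (fun v hv => PhiMap_mem g i hi hv) (fun w hw => PsiMap_mem g i hi hw), ?_, ?_⟩
  · intro v w
    funext j
    simp only [PhiMap, Pi.add_apply]
    split_ifs <;> simp [Matrix.add_vecMul] <;> abel
  · intro c v
    funext j
    simp only [PhiMap, Pi.smul_apply]
    split_ifs <;> simp [Matrix.smul_vecMul, smul_add]
end

section
/- The braid isomorphism Φ(g,βᵢ) : H_g → H_{g^{βᵢ}} maps the submodule E_g into E_{g^{βᵢ}}; explicitly, applying the formula of Φ(g,βᵢ) to the tuple (v·(g₁−1),…,v·(g_r−1)) yields the tuple (v·((g^{βᵢ})₁ − 1),…, v·((g^{βᵢ})_r − 1)). -/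
open Matrix

/-- `Φ(g, βᵢ)` maps `E_g` into `E_{g^{βᵢ}}`; explicitly, it sends the
coboundary tuple of `v` for `g` to the coboundary tuple of `v` for `g^{βᵢ}`. -/
theorem PhiMap_maps_Eset {R : Type*} [CommRing R] {n r : ℕ}
    (g : Fin r → Matrix.GeneralLinearGroup (Fin n) R)
    (hg : (List.ofFn g).prod = 1)
    (i : ℕ) (hi : i + 1 < r) :
    (∀ v : Fin n → R,
      PhiMap g i (fun j => Matrix.vecMul v ((g j : Matrix (Fin n) (Fin n) R) - 1)) =
        fun j => Matrix.vecMul v ((braidAct i g j : Matrix (Fin n) (Fin n) R) - 1)) ∧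
    PhiMap g i '' Eset g ⊆ Eset (braidAct i g) := by
  have key : ∀ v : Fin n → R,
      PhiMap g i (fun j => Matrix.vecMul v ((g j : Matrix (Fin n) (Fin n) R) - 1)) =
        fun j => Matrix.vecMul v ((braidAct i g j : Matrix (Fin n) (Fin n) R) - 1) := by
    intro v
    funext j
    unfold PhiMap braidAct
    simp only [hi, dif_pos]
    by_cases h1 : j.val = i
    · simp [h1]
    · by_cases h2 : j.val = i + 1
      · simp only [h1, h2, if_false, if_true, if_neg, if_pos, Nat.succ_ne_self]
        set a : Matrix (Fin n) (Fin n) R := (g ⟨i, Nat.lt_of_succ_lt hi⟩ : Matrix (Fin n) (Fin n) R)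
        set b : Matrix (Fin n) (Fin n) R := (g ⟨i + 1, hi⟩ : Matrix (Fin n) (Fin n) R)
        set c : Matrix (Fin n) (Fin n) R :=
          (((g ⟨i + 1, hi⟩)⁻¹ : Matrix.GeneralLinearGroup (Fin n) R) : Matrix (Fin n) (Fin n) R)
        have hbc : b * c = 1 := by
          simp [a, b, c, ← Matrix.GeneralLinearGroup.coe_mul]
        have hh : ((((g ⟨i + 1, hi⟩)⁻¹ * g ⟨i, Nat.lt_of_succ_lt hi⟩ * g ⟨i + 1, hi⟩ :
            Matrix.GeneralLinearGroup (Fin n) R)) : Matrix (Fin n) (Fin n) R) = c * a * b := by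
          simp [a, b, c, Matrix.GeneralLinearGroup.coe_mul]
        rw [hh, Matrix.vecMul_vecMul, Matrix.vecMul_vecMul, ← Matrix.vecMul_add]
        congr 1
        have habc : b * (c * a * b) = a * b := by
          rw [← mul_assoc, ← mul_assoc, hbc, one_mul]
        have expand : (b - 1) * (1 - c * a * b) + (a - 1) * b
            = b - b * (c * a * b) - 1 + c * a * b + (a * b - b) := by noncomm_ring
        rw [expand, habc]
        noncomm_ring
      · simp [h1, h2]
  refine ⟨key, ?_⟩
  rintro w ⟨x, ⟨u, hu⟩, rfl⟩
  refine ⟨u, fun j => ?_⟩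
  have : x = fun j => Matrix.vecMul u ((g j : Matrix (Fin n) (Fin n) R) - 1) := funext hu
  rw [this, key]
end

section
/- Let ω be a primitive cube root of unity. The vectors (1,0,0,0,−ω²), (0,1,0,0,−ω), (0,0,1,0,−1) form a basis of the space H_g = {(v₁,…,v₅) ∈ ℂ⁵ : v₁ g₂g₃g₄g₅ + v₂ g₃g₄g₅ + v₃ g₄g₅ + v₄ g₅ + v₅ = 0} modulo E_g, where g = (ω,ω,ω,ω,ω²); i.e. their images in H_g/E_g are linearly independent and span. -/
open Matrix

/-- The linear functional defining `H_g` for `g = (ω,ω,ω,ω,ω²)`: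
`v ↦ v₁(g₂g₃g₄g₅) + v₂(g₃g₄g₅) + v₃(g₄g₅) + v₄g₅ + v₅`. -/
noncomputable def picardRel (ω : ℂ) : (Fin 5 → ℂ) →ₗ[ℂ] ℂ :=
  (ω * ω * ω * ω^2) • LinearMap.proj 0 + (ω * ω * ω^2) • LinearMap.proj 1 +
    (ω * ω^2) • LinearMap.proj 2 + ω^2 • LinearMap.proj 3 + LinearMap.proj 4

/-- `H_g` for `g = (ω,ω,ω,ω,ω²)`. -/
noncomputable def picardH (ω : ℂ) : Submodule ℂ (Fin 5 → ℂ) :=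
  LinearMap.ker (picardRel ω)

/-- `E_g` for `g = (ω,ω,ω,ω,ω²)`: the line spanned by
`(ω-1, ω-1, ω-1, ω-1, ω²-1)`. -/
noncomputable def picardE (ω : ℂ) : Submodule ℂ (Fin 5 → ℂ) :=
  Submodule.span ℂ {![ω - 1, ω - 1, ω - 1, ω - 1, ω^2 - 1]}

/-- the vectors `(1,0,0,0,-ω²)`, `(0,1,0,0,-ω)`, `(0,0,1,0,-1)` form
a basis of `H_g` modulo `E_g` for `g = (ω,ω,ω,ω,ω²)`: they lie in `H_g`, their
images in `H_g/E_g` are linearly independent, and together with `E_g` they span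
`H_g`. -/
theorem picard_basis {ω : ℂ} (hω : IsPrimitiveRoot ω 3) :
    let b : Fin 3 → (Fin 5 → ℂ) :=
      ![![1, 0, 0, 0, -ω^2], ![0, 1, 0, 0, -ω], ![0, 0, 1, 0, -1]]
    (∀ k, b k ∈ picardH ω) ∧
    (∀ c : Fin 3 → ℂ, (∑ k, c k • b k) ∈ picardE ω → c = 0) ∧
    Submodule.span ℂ (Set.range b) ⊔ picardE ω = picardH ω := by
  have h3 : ω ^ 3 = 1 := hω.pow_eq_one
  have hne : ω ≠ 1 := hω.ne_one (by norm_num)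
  have hsub : ω - 1 ≠ 0 := sub_ne_zero.mpr hne
  have hsum : ω ^ 2 + ω + 1 = 0 := by
    have h : (ω - 1) * (ω ^ 2 + ω + 1) = 0 := by linear_combination h3
    exact (mul_eq_zero.mp h).resolve_left hsub
  intro b
  have hmem : ∀ k, b k ∈ picardH ω := by
    intro k
    fin_cases k <;>
      simp [picardH, picardRel, LinearMap.mem_ker, b] <;>
      first
        | linear_combination (ω^2) * h3
        | linear_combination ω * h3
        | linear_combination h3
  refine ⟨hmem, ?_, ?_⟩
  · intro c hc
    rw [picardE, Submodule.mem_span_singleton] at hc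
    obtain ⟨t, ht⟩ := hc
    have h3' := congr_fun ht 3
    simp [b, Fin.sum_univ_three] at h3'
    have ht0 : t = 0 := h3'.resolve_right hsub
    subst ht0
    funext k
    fin_cases k
    · have h := congr_fun ht 0
      simp [b, Fin.sum_univ_three, Matrix.vecHead, Matrix.vecTail] at h
      simpa using h.symm
    · have h := congr_fun ht 1
      simp [b, Fin.sum_univ_three, Matrix.vecHead, Matrix.vecTail] at h
      simpa using h.symm
    · have h := congr_fun ht 2
      simp [b, Fin.sum_univ_three, Matrix.vecHead, Matrix.vecTail] at h
      simpa using h.symm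
  · apply le_antisymm
    · refine sup_le ?_ ?_
      · rw [Submodule.span_le]
        rintro x ⟨k, rfl⟩
        exact hmem k
      · rw [picardE, Submodule.span_le, Set.singleton_subset_iff]
        simp only [SetLike.mem_coe, picardH, LinearMap.mem_ker, picardRel]
        simp
        linear_combination (ω^3 + 1) * h3
    · intro v hv
      simp only [picardH, LinearMap.mem_ker, picardRel, LinearMap.add_apply,
        LinearMap.smul_apply, LinearMap.proj_apply, smul_eq_mul] at hv
      rw [Submodule.mem_sup]
      refine ⟨(v 0 - v 3) • b 0 + (v 1 - v 3) • b 1 + (v 2 - v 3) • b 2, ?_,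
        (-(ω + 2) / 3 * v 3) • ![ω - 1, ω - 1, ω - 1, ω - 1, ω^2 - 1], ?_, ?_⟩
      · exact Submodule.add_mem _ (Submodule.add_mem _
          (Submodule.smul_mem _ _ (Submodule.subset_span ⟨0, rfl⟩))
          (Submodule.smul_mem _ _ (Submodule.subset_span ⟨1, rfl⟩)))
          (Submodule.smul_mem _ _ (Submodule.subset_span ⟨2, rfl⟩))
      · exact Submodule.smul_mem _ _ (Submodule.subset_span rfl)
      · funext i
        fin_cases i <;> simp [b]
        · linear_combination (-v 3 / 3) * hsum
        · linear_combination (-v 3 / 3) * hsum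
        · linear_combination (-v 3 / 3) * hsum
        · linear_combination (-v 3 / 3) * hsum
        · linear_combination -hv + (ω^2 * v 0 + ω * v 1 + v 2 - 2 * v 3 / 3) * h3 +
            ((ω + 3) * v 3 / 3) * hsum
end
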